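/- arXiv:1603.06658 — 3 statements merged into one kernel-verified Lean document; each statement's English description precedes it below -/
import Mathlib

section
/- For every n ≥ 1, every bilinear algorithm for the n×n symmetric matrix-vector product has length at least n(n+1)/2: if u_1,…,u_r : ℂ^N → ℂ (N = n(n+1)/2) and ψ_1,…,ψ_r : ℂⁿ → ℂ are linear functionals and w_1,…,w_r ∈ ℂⁿ are vectors such that for every s ∈ ℂ^N and v ∈ ℂⁿ the symmetric matrix S represented by s satisfies S·v = Σ_{j=1}^{r} u_j(s)·ψ_j(v)·w_j, then r ≥ n(n+1)/2. Hence the bilinear complexity of the symmetric matrix-vector product is exactly n(n+1)/2. -/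
/-- The symmetric `n × n` matrix represented by the vector `s` of its
upper-triangular entries (indexed by pairs `(i, j)` with `i ≤ j`). -/
def symOfUpper (n : ℕ) (s : {p : Fin n × Fin n // p.1 ≤ p.2} → ℂ) :
    Matrix (Fin n) (Fin n) ℂ :=
  Matrix.of fun i j =>
    if h : i ≤ j then s ⟨(i, j), h⟩ else s ⟨(j, i), (le_total i j).resolve_left h⟩

/-! If every product `A v` of a bilinear algorithm vanishes as soon as the `r` linear forms
`u_j(A)` do, then `A ↦ (u_j(A))_j` is injective on the parameter space, whose dimension is
therefore at most `r`. For symmetric matrices `S v = 0` for all `v` forces `S = 0`, hence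
`s = 0`, and the parameter space has dimension `n(n+1)/2`. -/

open Module

theorem finrank_le_card_of_eq_sum_smul {K V W X ι : Type*} [Field K] [AddCommGroup V]
    [Module K V] [FiniteDimensional K V] [AddCommGroup X] [Module K X] [Fintype ι]
    (B : V → W → X) (hB : ∀ s, (∀ v, B s v = 0) → s = 0)
    (u : ι → V →ₗ[K] K) (ψ : ι → W → K) (w : ι → X)
    (h : ∀ s v, B s v = ∑ j, (u j s * ψ j v) • w j) :
    finrank K V ≤ Fintype.card ι := by
  have hinj : Function.Injective (LinearMap.pi u) := by
    refine (injective_iff_map_eq_zero _).2 fun s hs => hB s fun v => ?_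
    have hu : ∀ j, u j s = 0 := fun j => congrFun hs j
    simp [h, hu]
  simpa using LinearMap.finrank_le_finrank_of_injective hinj

theorem card_subtype_fst_le_snd (α : Type*) [Fintype α] [LinearOrder α] :
    Fintype.card {p : α × α // p.1 ≤ p.2} = Fintype.card α * (Fintype.card α + 1) / 2 := by
  rw [← Fintype.card_congr Sym2.sortEquiv, Sym2.card, Nat.choose_two_right, Nat.mul_comm]
  rfl

theorem symOfUpper_apply_of_le {n : ℕ} (s : {p : Fin n × Fin n // p.1 ≤ p.2} → ℂ)
    {i j : Fin n} (hij : i ≤ j) : symOfUpper n s i j = s ⟨(i, j), hij⟩ := by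
  simp [symOfUpper, hij]

theorem eq_zero_of_symOfUpper_mulVec_eq_zero {n : ℕ} (s : {p : Fin n × Fin n // p.1 ≤ p.2} → ℂ)
    (hs : ∀ v, (symOfUpper n s).mulVec v = 0) : s = 0 := by
  funext ⟨⟨i, j⟩, hij⟩
  have hentry := congrFun (hs (Pi.single j 1)) i
  rwa [Matrix.mulVec_single, MulOpposite.op_one, one_smul, Matrix.col_apply,
    symOfUpper_apply_of_le s hij] at hentry

theorem symmetric_bilinear_algorithm_lower_bound_general (n : ℕ) (r : ℕ)
    (u : Fin r → ({p : Fin n × Fin n // p.1 ≤ p.2} → ℂ) →ₗ[ℂ] ℂ)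
    (ψ : Fin r → (Fin n → ℂ) →ₗ[ℂ] ℂ)
    (w : Fin r → Fin n → ℂ)
    (h : ∀ (s : {p : Fin n × Fin n // p.1 ≤ p.2} → ℂ) (v : Fin n → ℂ),
      (symOfUpper n s).mulVec v = ∑ j : Fin r, (u j s * ψ j v) • w j) :
    n * (n + 1) / 2 ≤ r := by
  have hle := finrank_le_card_of_eq_sum_smul (fun s v => (symOfUpper n s).mulVec v)
    eq_zero_of_symOfUpper_mulVec_eq_zero u (fun j => ψ j) w h
  simpa [card_subtype_fst_le_snd] using hle

/-- every bilinear algorithm for the `n × n` symmetric matrix-vector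
product has length at least `n(n+1)/2`; hence the bilinear complexity is exactly
`n(n+1)/2`. -/
theorem symmetric_bilinear_algorithm_lower_bound (n : ℕ) (hn : 1 ≤ n) (r : ℕ)
    (u : Fin r → ({p : Fin n × Fin n // p.1 ≤ p.2} → ℂ) →ₗ[ℂ] ℂ)
    (ψ : Fin r → (Fin n → ℂ) →ₗ[ℂ] ℂ)
    (w : Fin r → Fin n → ℂ)
    (h : ∀ (s : {p : Fin n × Fin n // p.1 ≤ p.2} → ℂ) (v : Fin n → ℂ),
      (symOfUpper n s).mulVec v = ∑ j : Fin r, (u j s * ψ j v) • w j) :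
    n * (n + 1) / 2 ≤ r :=
  symmetric_bilinear_algorithm_lower_bound_general n r u ψ w h
end

section
/- For every n ≥ 2 there exist linear functionals u_1,…,u_{4n−3} : ℂ^{2n−1} × ℂ^{2n−1} → ℂ, linear functionals ψ_1,…,ψ_{4n−3} : ℂⁿ → ℂ, and vectors w_1,…,w_{4n−3} ∈ ℂⁿ such that for every t, h ∈ ℂ^{2n−1} and every v ∈ ℂⁿ, the Toeplitz-plus-Hankel matrix X = T + H (with T the Toeplitz matrix represented by t and H the Hankel matrix represented by h) satisfies X·v = Σ_{j=1}^{4n−3} u_j(t,h)·ψ_j(v)·w_j. That is, the n×n Toeplitz-plus-Hankel matrix-vector product admits a bilinear algorithm of length 4n−3. -/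
/-- The `n × n` Toeplitz matrix represented by `t ∈ ℂ^(2n-1)`:
in 1-based indexing `T i j = t (j - i + n)`. -/
def toeplitzMat (n : ℕ) (t : Fin (2 * n - 1) → ℂ) : Matrix (Fin n) (Fin n) ℂ :=
  Matrix.of fun i j =>
    t ⟨j.val + (n - 1) - i.val, by have hi := i.isLt; have hj := j.isLt; omega⟩

/-- The `n × n` Hankel matrix represented by `h ∈ ℂ^(2n-1)`:
in 1-based indexing `H i j = h (2n + 1 - i - j)`. -/
def hankelMat (n : ℕ) (h : Fin (2 * n - 1) → ℂ) : Matrix (Fin n) (Fin n) ℂ :=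
  Matrix.of fun i j =>
    h ⟨2 * n - 2 - i.val - j.val, by have hi := i.isLt; have hj := j.isLt; omega⟩

/-!
With `m = 2n - 1`, both products are cyclic convolutions over `ZMod m`:
`(T v) i = ∑ j, a (i - j) * v j` and `(H v) i = ∑ j, b (-i - j) * v j`, where `a` and `b` are
reindexings of `t` and `h` (the indices `j - i + n - 1` and `2n - 2 - i - j` lie in `[0, m)`, so
nothing wraps around). A cyclic convolution of length `m` costs `m` multiplications of discrete
Fourier coefficients. The two algorithms share the Fourier coefficients of `v`, and at frequency `0`
both output vectors are the constant `1 / m`, so those two multiplications merge into one: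
`m + (m - 1) = 4n - 3`.
-/

open Finset Matrix

section BilinearAlgorithm

variable {K P V W ι κ : Type*} [CommSemiring K] [AddCommMonoid P] [Module K P]
  [AddCommMonoid V] [Module K V] [AddCommMonoid W] [Module K W] [Fintype ι] [Fintype κ]

def IsBilinearAlgorithm (f : P → V → W) (u : ι → P →ₗ[K] K) (ψ : ι → V →ₗ[K] K)
    (w : ι → W) : Prop :=
  ∀ p v, f p v = ∑ j, (u j p * ψ j v) • w j

namespace IsBilinearAlgorithm

variable {f : P → V → W} {u : ι → P →ₗ[K] K} {ψ : ι → V →ₗ[K] K} {w : ι → W}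

theorem reindex (hf : IsBilinearAlgorithm f u ψ w) (e : ι ≃ κ) :
    IsBilinearAlgorithm f (u ∘ e.symm) (ψ ∘ e.symm) (w ∘ e.symm) := fun p v => by
  rw [hf p v, ← e.symm.sum_comp]
  rfl

theorem precomp {P' : Type*} [AddCommMonoid P'] [Module K P'] (hf : IsBilinearAlgorithm f u ψ w)
    (A : P' →ₗ[K] P) {f' : P' → V → W} (hf' : ∀ p v, f' p v = f (A p) v) :
    IsBilinearAlgorithm f' (fun j => (u j).comp A) ψ w := fun p v => by
  rw [hf', hf]
  rfl

theorem prod_add_of_eq {P₁ P₂ : Type*} [AddCommMonoid P₁] [Module K P₁] [AddCommMonoid P₂]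
    [Module K P₂] [DecidableEq ι] {f₁ : P₁ → V → W} {f₂ : P₂ → V → W}
    {u₁ : ι → P₁ →ₗ[K] K} {u₂ : ι → P₂ →ₗ[K] K} {w₁ w₂ : ι → W}
    (h₁ : IsBilinearAlgorithm f₁ u₁ ψ w₁) (h₂ : IsBilinearAlgorithm f₂ u₂ ψ w₂)
    (j₀ : ι) (hw : w₁ j₀ = w₂ j₀) :
    IsBilinearAlgorithm (fun p v => f₁ p.1 v + f₂ p.2 v)
      (Sum.elim
        (fun j => (u₁ j).comp (LinearMap.fst K P₁ P₂) +
          if j = j₀ then (u₂ j).comp (LinearMap.snd K P₁ P₂) else 0)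
        (fun j : {j // j ≠ j₀} => (u₂ j).comp (LinearMap.snd K P₁ P₂)))
      (Sum.elim ψ fun j => ψ j) (Sum.elim w₁ fun j => w₂ j) := fun p v => by
  dsimp only
  rw [h₁, h₂, Fintype.sum_eq_add_sum_subtype_ne (fun j => (u₂ j p.2 * ψ j v) • w₂ j) j₀,
    Fintype.sum_sum_type]
  simp only [Sum.elim_inl, Sum.elim_inr, LinearMap.add_apply, LinearMap.comp_apply,
    LinearMap.fst_apply, LinearMap.snd_apply, add_mul, add_smul, sum_add_distrib,
    apply_ite (fun g : P₁ × P₂ →ₗ[K] K => g p), LinearMap.zero_apply, ite_mul, zero_mul,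
    ite_smul, zero_smul, sum_ite_eq', mem_univ, if_true, hw]
  abel

end IsBilinearAlgorithm

end BilinearAlgorithm

section CharacterSums

variable {R K J : Type*} [CommRing R] [Field K] [Fintype J]

def charSum (χ : AddChar R K) (e : J → R) (k : R) : (J → K) →ₗ[K] K :=
  ∑ j, χ (k * e j) • LinearMap.proj j

theorem charSum_apply (χ : AddChar R K) (e : J → R) (k : R) (x : J → K) :
    charSum χ e k x = ∑ j, χ (k * e j) * x j := by
  simp [charSum]

variable [Fintype R] {χ : AddChar R K}

theorem sum_sum_addChar_mul_sub_mul (hχ : χ.IsPrimitive) (a : R → K) (c : R) :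
    ∑ k, ∑ l, χ (k * (l - c)) * a l = Fintype.card R * a c := by
  classical
  rw [sum_comm]
  simp only [← sum_mul, AddChar.sum_mulShift _ hχ, sub_eq_zero, Nat.cast_ite, Nat.cast_zero,
    ite_mul, zero_mul, sum_ite_eq', mem_univ, if_true]

theorem sum_charSum_mul_charSum_mul_addChar_neg (hχ : χ.IsPrimitive) (e : J → R)
    (a : R → K) (x : J → K) (i : R) :
    ∑ k, charSum χ id k a * charSum χ e k x * χ (-(k * i)) =
      Fintype.card R * ∑ j, a (i - e j) * x j := by
  have hχmul : ∀ k l j, χ (k * l) * χ (k * e j) * χ (-(k * i)) = χ (k * (l - (i - e j))) := by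
    intro k l j
    rw [← AddChar.map_add_eq_mul, ← AddChar.map_add_eq_mul]
    congr 1
    ring
  calc ∑ k, charSum χ id k a * charSum χ e k x * χ (-(k * i))
      = ∑ j, (∑ k, ∑ l, χ (k * (l - (i - e j))) * a l) * x j := by
        simp only [sum_mul]
        rw [sum_comm]
        refine sum_congr rfl fun k _ => ?_
        rw [charSum_apply, charSum_apply, sum_mul_sum, sum_comm, sum_mul]
        refine sum_congr rfl fun j _ => ?_
        rw [sum_mul]
        refine sum_congr rfl fun l _ => ?_
        rw [← hχmul, id_eq]
        ring
    _ = _ := by simp only [sum_sum_addChar_mul_sub_mul hχ, mul_sum, mul_assoc]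

theorem isBilinearAlgorithm_cyclicConvolution (hχ : χ.IsPrimitive)
    (hR : (Fintype.card R : K) ≠ 0) {I : Type*} (o : I → R) (e : J → R) :
    IsBilinearAlgorithm (fun (a : R → K) (x : J → K) i => ∑ j, a (o i - e j) * x j)
      (charSum χ id) (charSum χ e) (fun k i => (Fintype.card R : K)⁻¹ * χ (-(k * o i))) :=
  fun a x => funext fun i => by
    simp only [Finset.sum_apply, Pi.smul_apply, smul_eq_mul]
    rw [← inv_mul_cancel_left₀ hR (∑ j, _), ← sum_charSum_mul_charSum_mul_addChar_neg hχ, mul_sum]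
    exact sum_congr rfl fun k _ => by ring

end CharacterSums

section ToeplitzHankel

variable (n : ℕ) [NeZero (2 * n - 1)]

def toeplitzIndex (y : ZMod (2 * n - 1)) : Fin (2 * n - 1) :=
  ⟨(((n - 1 : ℕ) : ZMod (2 * n - 1)) - y).val, ZMod.val_lt _⟩

def hankelIndex (y : ZMod (2 * n - 1)) : Fin (2 * n - 1) :=
  ⟨(((2 * n - 2 : ℕ) : ZMod (2 * n - 1)) + y).val, ZMod.val_lt _⟩

variable {n}

theorem val_toeplitzIndex (i j : Fin n) :
    (toeplitzIndex n ((i : ℕ) - (j : ℕ))).val = j + (n - 1) - i := by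
  have hi := i.isLt
  have hj := j.isLt
  have hcast : ((n - 1 : ℕ) : ZMod (2 * n - 1)) - ((i : ℕ) - (j : ℕ)) =
      ((j + (n - 1) : ℕ) : ZMod (2 * n - 1)) - (i : ℕ) := by
    push_cast
    ring
  rw [toeplitzIndex, Fin.val_mk, hcast, ZMod.val_sub] <;>
    rw [ZMod.val_cast_of_lt, ZMod.val_cast_of_lt] <;> omega

theorem val_hankelIndex (i j : Fin n) :
    (hankelIndex n (-(i : ℕ) - (j : ℕ))).val = 2 * n - 2 - i - j := by
  have hi := i.isLt
  have hj := j.isLt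
  have hcast : ((2 * n - 2 : ℕ) : ZMod (2 * n - 1)) + (-(i : ℕ) - (j : ℕ)) =
      ((2 * n - 2 : ℕ) : ZMod (2 * n - 1)) - (i + j : ℕ) := by
    push_cast
    ring
  rw [hankelIndex, Fin.val_mk, hcast, ZMod.val_sub] <;>
    rw [ZMod.val_cast_of_lt, ZMod.val_cast_of_lt] <;> omega

variable (n)

theorem toeplitzMat_mulVec (t : Fin (2 * n - 1) → ℂ) (v : Fin n → ℂ) :
    toeplitzMat n t *ᵥ v = fun i : Fin n =>
      ∑ j : Fin n, t (toeplitzIndex n ((i : ℕ) - (j : ℕ))) * v j :=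
  funext fun i => by
    simp only [mulVec, dotProduct, toeplitzMat, of_apply]
    congr! with j
    exact (val_toeplitzIndex i j).symm

theorem hankelMat_mulVec (h : Fin (2 * n - 1) → ℂ) (v : Fin n → ℂ) :
    hankelMat n h *ᵥ v = fun i : Fin n =>
      ∑ j : Fin n, h (hankelIndex n (-(i : ℕ) - (j : ℕ))) * v j :=
  funext fun i => by
    simp only [mulVec, dotProduct, hankelMat, of_apply]
    congr! with j
    exact (val_hankelIndex i j).symm

end ToeplitzHankel

/-- the `n × n` Toeplitz-plus-Hankel matrix-vector product admits a
bilinear algorithm of length `4n - 3`, with linear functionals in the parameters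
`(t, h) ∈ ℂ^(2n-1) × ℂ^(2n-1)`. -/
theorem toeplitz_plus_hankel_bilinear_algorithm_length (n : ℕ) (hn : 2 ≤ n) :
    ∃ u : Fin (4 * n - 3) → ((Fin (2 * n - 1) → ℂ) × (Fin (2 * n - 1) → ℂ)) →ₗ[ℂ] ℂ,
    ∃ ψ : Fin (4 * n - 3) → (Fin n → ℂ) →ₗ[ℂ] ℂ,
    ∃ w : Fin (4 * n - 3) → Fin n → ℂ,
      ∀ (t h : Fin (2 * n - 1) → ℂ) (v : Fin n → ℂ),
        (toeplitzMat n t + hankelMat n h).mulVec v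
          = ∑ j : Fin (4 * n - 3), (u j (t, h) * ψ j v) • w j := by
  have : NeZero (2 * n - 1) := ⟨by omega⟩
  have hm : (Fintype.card (ZMod (2 * n - 1)) : ℂ) ≠ 0 := by
    rw [ZMod.card, Nat.cast_ne_zero]
    omega
  have hχ := ZMod.isPrimitive_stdAddChar (2 * n - 1)
  let e : Fin n → ZMod (2 * n - 1) := fun j => (j : ℕ)
  have hT := (isBilinearAlgorithm_cyclicConvolution hχ hm e e).precomp
    (LinearMap.funLeft ℂ ℂ (toeplitzIndex n)) (toeplitzMat_mulVec n)
  have hH := (isBilinearAlgorithm_cyclicConvolution hχ hm (-e) e).precomp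
    (LinearMap.funLeft ℂ ℂ (hankelIndex n)) (hankelMat_mulVec n)
  have hlen : Fintype.card (ZMod (2 * n - 1) ⊕ {k : ZMod (2 * n - 1) // k ≠ 0}) = 4 * n - 3 := by
    rw [Fintype.card_sum, Fintype.card_subtype_compl, Fintype.card_subtype_eq, ZMod.card]
    omega
  have halg := (hT.prod_add_of_eq hH 0 (by simp)).reindex (Fintype.equivFinOfCardEq hlen)
  exact ⟨_, _, _, fun t h v => by rw [add_mulVec]; exact halg (t, h) v⟩
end

section
/- Let n, m ≥ 1. There exist linear functionals u_1,…,u_{(2n−1)(2m−1)} : ℂ^{2n−1} × ℂ^{2m−1} → ℂ of the product form u_l(t,s) = φ_l(t)·χ_l(s) with φ_l, χ_l linear, linear functionals ψ_1,…,ψ_{(2n−1)(2m−1)} : ℂ^{nm} → ℂ, and vectors w_1,…,w_{(2n−1)(2m−1)} ∈ ℂ^{nm} such that for every t ∈ ℂ^{2n−1}, s ∈ ℂ^{2m−1}, and v ∈ ℂ^{nm}, (A ⊗ B)·v = Σ_{l=1}^{(2n−1)(2m−1)} φ_l(t)·χ_l(s)·ψ_l(v)·w_l, where A is the n×n Toeplitz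 matrix represented by t and B is the m×m Toeplitz matrix represented by s. That is, the two-level Toeplitz (BTTB) matrix-vector product admits a bilinear algorithm of length (2n−1)(2m−1). -/
/-!
A Toeplitz matrix of size `n` is a principal submatrix of a circulant matrix of size
`N = 2n - 1`, and circulants are diagonalised by the discrete Fourier transform. Concretely,
for a primitive `N`-th root of unity `ζ`, orthogonality of characters gives
`T i k = N⁻¹ ∑ₐ t̂ₐ ζ^(a i) ζ^(-a k)` with `t̂ₐ = ∑ₚ ζ^(a (p - (n - 1))) tₚ`, so
`T` is a sum of `N` rank-one matrices whose coefficients are linear in `t`.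
The Kronecker product of two such expansions is again one, indexed by pairs `(a, b)`;
applying it to `v` uses one product `t̂ₐ ŝ_b ψ_{a,b}(v)` per pair.
-/

open Kronecker

namespace Matrix

theorem sum_smul_vecMulVec_kronecker {R α β ι κ ι' κ' : Type*} [CommSemiring R] [Fintype α]
    [Fintype β] (c : α → R) (x : α → ι → R) (y : α → κ → R) (c' : β → R) (x' : β → ι' → R)
    (y' : β → κ' → R) :
    (∑ a, c a • vecMulVec (x a) (y a)) ⊗ₖ (∑ b, c' b • vecMulVec (x' b) (y' b))
      = ∑ p : α × β, (c p.1 * c' p.2) •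
          vecMulVec (fun i => x p.1 i.1 * x' p.2 i.2) (fun k => y p.1 k.1 * y' p.2 k.2) := by
  ext i k
  simp only [kroneckerMap_apply, sum_apply, smul_apply, vecMulVec_apply, smul_eq_mul,
    Fintype.sum_prod_type, Finset.sum_mul_sum]
  exact Finset.sum_congr rfl fun a _ => Finset.sum_congr rfl fun b _ => by ring

end Matrix

theorem IsPrimitiveRoot.sum_zpow_mul_eq_zero {K : Type*} [Field K] {ζ : K} {N : ℕ}
    (hζ : IsPrimitiveRoot ζ N) {d : ℤ} (hd : ¬ (N : ℤ) ∣ d) :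
    ∑ a : Fin N, ζ ^ ((a : ℤ) * d) = 0 := by
  have hζd : ζ ^ d ≠ 1 := mt (hζ.zpow_eq_one_iff_dvd d).mp hd
  have hζdN : (ζ ^ d) ^ N = 1 := by
    rw [← zpow_natCast, ← zpow_mul, mul_comm, zpow_mul, zpow_natCast, hζ.pow_eq_one, one_zpow]
  simp_rw [mul_comm _ d, zpow_mul, zpow_natCast]
  rw [Fin.sum_univ_eq_sum_range (fun a => (ζ ^ d) ^ a), geom_sum_eq hζd, hζdN, sub_self,
    zero_div]

theorem IsPrimitiveRoot.sum_zpow_mul_eq_ite {K : Type*} [Field K] {ζ : K} {N : ℕ}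
    (hζ : IsPrimitiveRoot ζ N) {d : ℤ} (hd : |d| < N) :
    ∑ a : Fin N, ζ ^ ((a : ℤ) * d) = if d = 0 then (N : K) else 0 := by
  split_ifs with h
  · simp [h]
  · exact hζ.sum_zpow_mul_eq_zero fun hdvd => h (Int.eq_zero_of_abs_lt_dvd hdvd hd)

theorem toeplitzMat_eq_sum_smul_vecMulVec {n : ℕ} {ζ : ℂ} (hζ : IsPrimitiveRoot ζ (2 * n - 1))
    (t : Fin (2 * n - 1) → ℂ) :
    toeplitzMat n t = ∑ a : Fin (2 * n - 1),
      ((fun p : Fin (2 * n - 1) => ζ ^ ((a : ℤ) * (p - (n - 1)))) ⬝ᵥ t) •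
        Matrix.vecMulVec (fun i : Fin n => ζ ^ ((a : ℤ) * i) / (2 * n - 1 : ℕ))
          (fun k : Fin n => ζ ^ (-((a : ℤ) * k))) := by
  ext i k
  have hi := i.isLt
  have hk := k.isLt
  have hN : ((2 * n - 1 : ℕ) : ℂ) ≠ 0 := Nat.cast_ne_zero.mpr (by omega)
  have hζ0 : ζ ≠ 0 := hζ.ne_zero (by omega)
  set p₀ : Fin (2 * n - 1) := ⟨k + (n - 1) - i, by omega⟩
  have orthogonality (p : Fin (2 * n - 1)) :
      ∑ a : Fin (2 * n - 1), ζ ^ ((a : ℤ) * (p - (n - 1) + i - k))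
        = if p = p₀ then ((2 * n - 1 : ℕ) : ℂ) else 0 := by
    rw [hζ.sum_zpow_mul_eq_ite (by rw [abs_lt]; omega)]
    congr 1
    simp only [p₀, Fin.ext_iff, eq_iff_iff]
    omega
  calc toeplitzMat n t i k = t p₀ := rfl
    _ = (∑ p, t p * if p = p₀ then ((2 * n - 1 : ℕ) : ℂ) else 0) / (2 * n - 1 : ℕ) := by
      simp [hN]
    _ = _ := by
      simp only [← orthogonality, Finset.mul_sum, Finset.sum_div, Matrix.sum_apply,
        Matrix.smul_apply, Matrix.vecMulVec_apply, dotProduct, Finset.sum_mul, smul_eq_mul]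
      rw [Finset.sum_comm]
      refine Finset.sum_congr rfl fun a _ => Finset.sum_congr rfl fun p _ => ?_
      rw [show (a : ℤ) * (p - (n - 1) + i - k) = a * (p - (n - 1)) + a * i + -(a * k) by ring,
        zpow_add₀ hζ0, zpow_add₀ hζ0]
      ring

theorem exists_toeplitzMat_eq_sum_smul_vecMulVec {n : ℕ} (hn : 1 ≤ n) :
    ∃ (c : Fin (2 * n - 1) → Fin (2 * n - 1) → ℂ) (x y : Fin (2 * n - 1) → Fin n → ℂ),
      ∀ t, toeplitzMat n t = ∑ a, (c a ⬝ᵥ t) • Matrix.vecMulVec (x a) (y a) :=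
  ⟨_, _, _, toeplitzMat_eq_sum_smul_vecMulVec (Complex.isPrimitiveRoot_exp _ (by omega))⟩

/-- the two-level Toeplitz (BTTB) matrix-vector product admits a
bilinear algorithm of length `(2n-1)(2m-1)`, whose matrix functionals have the
product form `u_l(t,s) = φ_l(t)·χ_l(s)` with `φ_l, χ_l` linear. -/
theorem bttb_bilinear_algorithm_length (n m : ℕ) (hn : 1 ≤ n) (hm : 1 ≤ m) :
    ∃ φ : Fin ((2 * n - 1) * (2 * m - 1)) → (Fin (2 * n - 1) → ℂ) →ₗ[ℂ] ℂ,
    ∃ χ : Fin ((2 * n - 1) * (2 * m - 1)) → (Fin (2 * m - 1) → ℂ) →ₗ[ℂ] ℂ,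
    ∃ ψ : Fin ((2 * n - 1) * (2 * m - 1)) → (Fin n × Fin m → ℂ) →ₗ[ℂ] ℂ,
    ∃ w : Fin ((2 * n - 1) * (2 * m - 1)) → Fin n × Fin m → ℂ,
      ∀ (t : Fin (2 * n - 1) → ℂ) (s : Fin (2 * m - 1) → ℂ) (v : Fin n × Fin m → ℂ),
        ((toeplitzMat n t) ⊗ₖ (toeplitzMat m s)).mulVec v
          = ∑ l : Fin ((2 * n - 1) * (2 * m - 1)), (φ l t * χ l s * ψ l v) • w l := by
  obtain ⟨c, x, y, hA⟩ := exists_toeplitzMat_eq_sum_smul_vecMulVec hn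
  obtain ⟨c', x', y', hB⟩ := exists_toeplitzMat_eq_sum_smul_vecMulVec hm
  let e := (finProdFinEquiv (m := 2 * n - 1) (n := 2 * m - 1)).symm
  refine ⟨fun l => dotProductBilin ℂ ℂ (c (e l).1), fun l => dotProductBilin ℂ ℂ (c' (e l).2),
    fun l => dotProductBilin ℂ ℂ fun k => y (e l).1 k.1 * y' (e l).2 k.2,
    fun l i => x (e l).1 i.1 * x' (e l).2 i.2, fun t s v => ?_⟩
  rw [hA, hB, Matrix.sum_smul_vecMulVec_kronecker, ← e.symm.sum_comp]
  simp only [Matrix.sum_mulVec, Matrix.smul_mulVec, Matrix.vecMulVec_mulVec, op_smul_eq_smul,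
    smul_smul, Equiv.symm_symm, Equiv.symm_apply_apply, dotProductBilin_apply_apply, e]
end
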